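/- Let t ≥ 0, b = 30t+29, a = 30t+31 be twin primes. Then max over n ≥ 2 of (H_a(n) − H_b(n)) is at most 6 if and only if 30t+37, 30t+41, 30t+43 are all prime, i.e. if and only if 30t+29, 30t+31, 30t+37, 30t+41, 30t+43 form a constellation p, p+2, p+8, p+12, p+14 of five consecutive primes. -/

import Mathlib

/-- The H-sequence with starting value `c`: `Hseq c 2 = c` and for `n ≥ 2`,
`Hseq c (n+1)` is the least `m > Hseq c n` with (`m` prime ↔ `n+1` prime). -/
noncomputable def Hseq (c : ℕ) : ℕ → ℕ
  | 0 => c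
  | 1 => c
  | 2 => c
  | n + 3 => sInf {m | Hseq c (n + 2) < m ∧ (Nat.Prime m ↔ Nat.Prime (n + 3))}
/-- A list of primes, strictly increasing, with no other primes in between. -/
def ConsecPrimes (l : List ℕ) : Prop :=
  l.Chain' (· < ·) ∧ (∀ x ∈ l, Nat.Prime x) ∧
    ∀ q, Nat.Prime q → l.headI ≤ q → q ≤ l.getLast! → q ∈ l

/-!
Measure both sequences from `30 t` and cap them at `30 t + 67`. For `29 ≤ k < 67` the
primality of `30 t + k` is decided by `k mod 30` and the hypotheses, except at the eight
offsets `37, 41, 43, 47, 49, 53, 59, 61`, and running the defining rule with primality read off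
such a pattern reproduces the capped sequences. Since the forward direction only needs the
indices up to 17, it becomes a check over all `2 ^ 8` patterns. Conversely, if `30 t + 37`,
`30 t + 41`, `30 t + 43` are prime, the sequences stand at `30 t + 45` and `30 t + 46` at
index 10; as `30 t + 46` is even they both move to the first prime above it at the prime
index 11, and a common value is never left again.
-/

lemma exists_lt_prime_iff (x : ℕ) (p : Prop) : ∃ m, x < m ∧ (m.Prime ↔ p) := by
  by_cases hp : p
  · obtain ⟨q, hxq, hq⟩ := Nat.exists_infinite_primes (x + 1)
    exact ⟨q, hxq, iff_of_true hq hp⟩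
  · exact ⟨2 * (x + 2), by omega, iff_of_false (Nat.not_prime_mul (by omega) (by omega)) hp⟩

lemma Hseq_succ (c : ℕ) {n : ℕ} (hn : 2 ≤ n) :
    Hseq c (n + 1) = sInf {m | Hseq c n < m ∧ (m.Prime ↔ (n + 1).Prime)} := by
  obtain ⟨k, rfl⟩ := Nat.exists_eq_add_of_le' hn
  rfl

lemma Hseq_succ_spec (c : ℕ) {n : ℕ} (hn : 2 ≤ n) :
    Hseq c n < Hseq c (n + 1) ∧ ((Hseq c (n + 1)).Prime ↔ (n + 1).Prime) := by
  rw [Hseq_succ c hn]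
  exact Nat.sInf_mem (exists_lt_prime_iff _ _)

lemma Hseq_succ_le (c : ℕ) {n m : ℕ} (hn : 2 ≤ n) (hm : Hseq c n < m)
    (hp : m.Prime ↔ (n + 1).Prime) : Hseq c (n + 1) ≤ m := by
  rw [Hseq_succ c hn]
  exact Nat.sInf_le ⟨hm, hp⟩

lemma Hseq_monotone (c : ℕ) : Monotone (Hseq c) := by
  refine monotone_nat_of_le_succ fun n => ?_
  rcases lt_or_ge n 2 with hn | hn
  · interval_cases n <;> rfl
  · exact (Hseq_succ_spec c hn).1.le

lemma le_Hseq (c n : ℕ) : c ≤ Hseq c n :=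
  Hseq_monotone c (Nat.zero_le n)

lemma Hseq_succ_eq_of_forall_not {c d n : ℕ} (hn : 2 ≤ n) (hcd : Hseq c n ≤ Hseq d n)
    (hgap : ∀ m, Hseq c n < m → m ≤ Hseq d n → ¬(m.Prime ↔ (n + 1).Prime)) :
    Hseq c (n + 1) = Hseq d (n + 1) := by
  obtain ⟨hc_lt, hc_prime⟩ := Hseq_succ_spec c hn
  obtain ⟨hd_lt, hd_prime⟩ := Hseq_succ_spec d hn
  have hd_lt_c : Hseq d n < Hseq c (n + 1) := by
    by_contra! h
    exact hgap _ hc_lt h hc_prime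
  exact le_antisymm (Hseq_succ_le c hn (hcd.trans_lt hd_lt) hd_prime)
    (Hseq_succ_le d hn hd_lt_c hc_prime)

lemma Hseq_eq_of_le {c d n m : ℕ} (hn : 2 ≤ n) (h : Hseq c n = Hseq d n) (hm : n ≤ m) :
    Hseq c m = Hseq d m := by
  induction m, hm using Nat.le_induction with
  | base => exact h
  | succ m hnm ih =>
    exact Hseq_succ_eq_of_forall_not (hn.trans hnm) ih.le fun k hlt hle => by omega

def nextIn (Q : ℕ → Bool) (W x : ℕ) (want : Bool) : ℕ :=
  ((List.range' (x + 1) (W - (x + 1))).find? fun k => Q k == want).getD W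

lemma nextIn_spec (Q : ℕ → Bool) (W x : ℕ) (want : Bool) :
    nextIn Q W x want ≤ W ∧
      (nextIn Q W x want < W → x < nextIn Q W x want ∧ Q (nextIn Q W x want) = want) ∧
      ∀ k, x < k → k < nextIn Q W x want → Q k ≠ want := by
  unfold nextIn
  cases h : (List.range' (x + 1) (W - (x + 1))).find? fun k => Q k == want with
  | none =>
    rw [List.find?_range'_eq_none] at h
    simp only [Option.getD_none]
    refine ⟨le_rfl, fun h => absurd h (lt_irrefl _), fun k hxk hkW => ?_⟩
    simpa using h k hxk (by omega)
  | some y =>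
    obtain ⟨hy, hmem, hmin⟩ := List.find?_range'_eq_some.1 h
    rw [List.mem_range'_1] at hmem
    rw [Option.getD_some]
    refine ⟨by omega, fun _ => ⟨by omega, by simpa using hy⟩, fun k hxk hky => ?_⟩
    simpa using hmin k hxk hky

/-- The H-sequence with `Nat.Prime` replaced by `Q` and all values capped at `W`. -/
def windowSeq (Q : ℕ → Bool) (W c : ℕ) : ℕ → ℕ
  | 0 => c
  | 1 => c
  | 2 => c
  | n + 3 => nextIn Q W (windowSeq Q W c (n + 2)) (n + 3).Prime

section Window

variable {N W c : ℕ} {Q : ℕ → Bool}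

lemma min_Hseq_succ_eq_nextIn (hcW : c ≤ W)
    (hQ : ∀ k, c ≤ k → k < W → (Q k ↔ (N + k).Prime)) {n x : ℕ} (hn : 2 ≤ n)
    (hx : min (Hseq (N + c) n) (N + W) = N + x) :
    min (Hseq (N + c) (n + 1)) (N + W) = N + nextIn Q W x (n + 1).Prime := by
  obtain ⟨hyW, hy_match, hy_gap⟩ := nextIn_spec Q W x (n + 1).Prime
  obtain ⟨hlt, hprime⟩ := Hseq_succ_spec (N + c) hn
  have hcx : c ≤ x := by
    have := le_Hseq (N + c) n
    omega
  have lower : N + nextIn Q W x (n + 1).Prime ≤ Hseq (N + c) (n + 1) := by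
    by_contra! h
    obtain ⟨k, hk⟩ : ∃ k, Hseq (N + c) (n + 1) = N + k :=
      ⟨Hseq (N + c) (n + 1) - N, by omega⟩
    refine hy_gap k (by omega) (by omega) ?_
    have := hQ k (by omega) (by omega)
    rw [← hk, hprime] at this
    exact Bool.eq_iff_iff.2 (this.trans decide_eq_true_iff.symm)
  have upper (hy : nextIn Q W x (n + 1).Prime < W) :
      Hseq (N + c) (n + 1) ≤ N + nextIn Q W x (n + 1).Prime := by
    obtain ⟨hxy, hQy⟩ := hy_match hy
    refine Hseq_succ_le _ hn (by omega) ?_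
    rw [← hQ _ (by omega) hy, hQy]
    simp
  omega

theorem min_Hseq_eq_windowSeq (hcW : c ≤ W)
    (hQ : ∀ k, c ≤ k → k < W → (Q k ↔ (N + k).Prime)) :
    ∀ n, min (Hseq (N + c) n) (N + W) = N + windowSeq Q W c n
  | 0 | 1 | 2 => min_eq_left (show N + c ≤ N + W by omega)
  | n + 3 => min_Hseq_succ_eq_nextIn hcW hQ (by omega) (min_Hseq_eq_windowSeq hcW hQ (n + 2))

end Window

lemma coprime_thirty_of_prime {t k : ℕ} (hk : 5 < k) (hp : (30 * t + k).Prime) :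
    k.Coprime 30 := by
  have h2 := (Nat.coprime_primes hp Nat.prime_two).2 (by omega)
  have h3 := (Nat.coprime_primes hp Nat.prime_three).2 (by omega)
  have h5 := (Nat.coprime_primes hp Nat.prime_five).2 (by omega)
  exact (Nat.coprime_mul_left_add_left k 30 t).1 ((h2.mul_right h3).mul_right h5)

def candidateOffsets : List ℕ := [37, 41, 43, 47, 49, 53, 59, 61]

lemma mem_candidateOffsets_of_coprime :
    ∀ k < 67, 29 ≤ k → k.Coprime 30 → k ∈ 29 :: 31 :: candidateOffsets := by
  decide

def primeOffsets (t : ℕ) : List ℕ := candidateOffsets.filter fun k => (30 * t + k).Prime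

lemma mem_primeOffsets_iff_prime {t k : ℕ} (hb : (30 * t + 29).Prime) (ha : (30 * t + 31).Prime)
    (hk : 29 ≤ k) (hk' : k < 67) : k ∈ 29 :: 31 :: primeOffsets t ↔ (30 * t + k).Prime := by
  constructor
  · intro h
    simp only [primeOffsets, List.mem_cons, List.mem_filter, decide_eq_true_eq] at h
    rcases h with rfl | rfl | ⟨-, h⟩ <;> assumption
  · intro hp
    have := mem_candidateOffsets_of_coprime k hk' hk (coprime_thirty_of_prime (by omega) hp)
    simp only [primeOffsets, List.mem_cons, List.mem_filter, decide_eq_true_eq] at this ⊢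
    tauto

lemma primeOffsets_mem_sublists (t : ℕ) : primeOffsets t ∈ candidateOffsets.sublists :=
  List.mem_sublists.2 List.filter_sublist

def offsetSeq (A : List ℕ) (c : ℕ) : ℕ → ℕ := windowSeq (· ∈ 29 :: 31 :: A) 67 c

lemma min_Hseq_eq_offsetSeq {t c : ℕ} (hb : (30 * t + 29).Prime) (ha : (30 * t + 31).Prime)
    (hc : 29 ≤ c) (hc' : c ≤ 67) (n : ℕ) :
    min (Hseq (30 * t + c) n) (30 * t + 67) = 30 * t + offsetSeq (primeOffsets t) c n :=
  min_Hseq_eq_windowSeq hc' (fun k hck hk => by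
    simpa using mem_primeOffsets_iff_prime hb ha (hc.trans hck) hk) n

lemma mem_of_offsetSeq_sub_le_six : ∀ A ∈ candidateOffsets.sublists,
    (∀ n ∈ List.range' 2 16, offsetSeq A 31 n - offsetSeq A 29 n ≤ 6) →
      37 ∈ A ∧ 41 ∈ A ∧ 43 ∈ A := by
  decide +kernel

lemma offsetSeq_sub_le_six_of_mem :
    ∀ A ∈ candidateOffsets.sublists, 37 ∈ A → 41 ∈ A → 43 ∈ A →
      offsetSeq A 29 10 = 45 ∧ offsetSeq A 31 10 = 46 ∧
        ∀ n ∈ List.range' 2 9, offsetSeq A 31 n - offsetSeq A 29 n ≤ 6 := by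
  decide +kernel

theorem prime_of_Hseq_sub_le_six {t : ℕ} (hb : (30 * t + 29).Prime) (ha : (30 * t + 31).Prime)
    (hdiff : ∀ n, 2 ≤ n → Hseq (30 * t + 31) n - Hseq (30 * t + 29) n ≤ 6) :
    (30 * t + 37).Prime ∧ (30 * t + 41).Prime ∧ (30 * t + 43).Prime := by
  have hoffset : ∀ n ∈ List.range' 2 16,
      offsetSeq (primeOffsets t) 31 n - offsetSeq (primeOffsets t) 29 n ≤ 6 := by
    intro n hn
    have h31 := min_Hseq_eq_offsetSeq hb ha (c := 31) (by norm_num) (by norm_num) n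
    have h29 := min_Hseq_eq_offsetSeq hb ha (c := 29) le_rfl (by norm_num) n
    have := hdiff n (List.mem_range'_1.1 hn).1
    omega
  obtain ⟨h37, h41, h43⟩ := mem_of_offsetSeq_sub_le_six _ (primeOffsets_mem_sublists t) hoffset
  simp only [primeOffsets, List.mem_filter, decide_eq_true_eq] at h37 h41 h43
  exact ⟨h37.2, h41.2, h43.2⟩

theorem Hseq_sub_le_six_of_prime {t : ℕ} (hb : (30 * t + 29).Prime) (ha : (30 * t + 31).Prime)
    (h37 : (30 * t + 37).Prime) (h41 : (30 * t + 41).Prime) (h43 : (30 * t + 43).Prime) :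
    ∀ n, 2 ≤ n → Hseq (30 * t + 31) n - Hseq (30 * t + 29) n ≤ 6 := by
  obtain ⟨hb10, ha10, hoffset⟩ := offsetSeq_sub_le_six_of_mem (primeOffsets t)
    (primeOffsets_mem_sublists t) (by simp [primeOffsets, candidateOffsets, h37])
    (by simp [primeOffsets, candidateOffsets, h41]) (by simp [primeOffsets, candidateOffsets, h43])
  have h29 := min_Hseq_eq_offsetSeq hb ha (c := 29) le_rfl (by norm_num)
  have h31 := min_Hseq_eq_offsetSeq hb ha (c := 31) (by norm_num) (by norm_num)
  have hb10' : Hseq (30 * t + 29) 10 = 30 * t + 45 := by have := h29 10; omega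
  have ha10' : Hseq (30 * t + 31) 10 = 30 * t + 46 := by have := h31 10; omega
  have h11 : Hseq (30 * t + 29) 11 = Hseq (30 * t + 31) 11 := by
    refine Hseq_succ_eq_of_forall_not (by norm_num) (by omega) fun m hlo hhi => ?_
    obtain rfl : m = 2 * (15 * t + 23) := by omega
    exact fun h => Nat.not_prime_mul (by omega) (by omega) (h.2 (by norm_num))
  intro n hn
  rcases lt_or_ge n 11 with hlt | hge
  · have hmono := Hseq_monotone (30 * t + 31) (show n ≤ 10 by omega)
    have h29n := h29 n
    have h31n := h31 n
    have hoffset_n := hoffset n (List.mem_range'_1.2 ⟨hn, by omega⟩)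
    omega
  · rw [Hseq_eq_of_le (by norm_num) h11 hge, Nat.sub_self]
    norm_num

theorem consecPrimes_iff {t : ℕ} (hb : (30 * t + 29).Prime) (ha : (30 * t + 31).Prime) :
    ConsecPrimes [30 * t + 29, 30 * t + 31, 30 * t + 37, 30 * t + 41, 30 * t + 43] ↔
      (30 * t + 37).Prime ∧ (30 * t + 41).Prime ∧ (30 * t + 43).Prime := by
  constructor
  · rintro ⟨-, hprime, -⟩
    exact ⟨hprime _ (by simp), hprime _ (by simp), hprime _ (by simp)⟩
  · rintro ⟨h37, h41, h43⟩
    refine ⟨?_, by simp [*], fun q hq hlo hhi => ?_⟩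
    · show List.IsChain (· < ·) _
      simp only [List.isChain_cons_cons, List.isChain_singleton, and_true]
      omega
    have hlo' : 30 * t + 29 ≤ q := hlo
    have hhi' : q ≤ 30 * t + 43 := by simpa [List.getLast!] using hhi
    obtain ⟨k, rfl⟩ : ∃ k, q = 30 * t + k := ⟨q - 30 * t, by omega⟩
    have hk := (mem_primeOffsets_iff_prime hb ha (by omega) (by omega)).2 hq
    simp only [primeOffsets, candidateOffsets, List.mem_cons, List.mem_filter, List.not_mem_nil,
      or_false] at hk ⊢
    omega

theorem stmt10 (t : ℕ) (hb : Nat.Prime (30*t+29)) (ha : Nat.Prime (30*t+31)) :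
    ((∀ n, 2 ≤ n → Hseq (30*t+31) n - Hseq (30*t+29) n ≤ 6) ↔
        (Nat.Prime (30*t+37) ∧ Nat.Prime (30*t+41) ∧ Nat.Prime (30*t+43))) ∧
    ((∀ n, 2 ≤ n → Hseq (30*t+31) n - Hseq (30*t+29) n ≤ 6) ↔
        ConsecPrimes [30*t+29, 30*t+31, 30*t+37, 30*t+41, 30*t+43]) := by
  have hiff : (∀ n, 2 ≤ n → Hseq (30*t+31) n - Hseq (30*t+29) n ≤ 6) ↔
      (Nat.Prime (30*t+37) ∧ Nat.Prime (30*t+41) ∧ Nat.Prime (30*t+43)) :=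
    ⟨prime_of_Hseq_sub_le_six hb ha,
      fun ⟨h37, h41, h43⟩ => Hseq_sub_le_six_of_prime hb ha h37 h41 h43⟩
  exact ⟨hiff, hiff.trans (consecPrimes_iff hb ha).symm⟩
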